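/- arXiv:1606.06151 — 6 statements merged into one kernel-verified Lean document; each statement's English description precedes it below -/
import Mathlib

section
/- The stabilizer of the conic C is transitive on the internal points of C: for any vectors v, w ∈ K³ such that −Q(v) and −Q(w) are both nonsquares in K, there exist a similitude A of Q and a nonzero scalar λ ∈ K with A·v = λ·w. -/
/-- The quadratic form `Q(x₀,x₁,x₂) = x₀x₁ - x₂²` on `K³`. -/
def quadForm (K : Type*) [CommRing K] (v : Fin 3 → K) : K := v 0 * v 1 - v 2 ^ 2

/-- A matrix `A ∈ GL(3,K)` is a similitude of `Q` if `Q(A·x) = c·Q(x)` for some `c ∈ K*`. -/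
def IsSimilitude (K : Type*) [CommRing K] (A : Matrix (Fin 3) (Fin 3) K) : Prop :=
  IsUnit A ∧ ∃ c : K, c ≠ 0 ∧ ∀ x : Fin 3 → K, quadForm K (A.mulVec x) = c * quadForm K x

/-!
Identify `x ∈ K³` with the binary quadratic form `x₀X² + 2x₂XY + x₁Y²`, whose determinant is
`Q(x)`. Substitutions of variables by `GL₂(K)` then act on `K³` by similitudes of `Q` with
multiplier the squared determinant. An internal point `v` has `v₀ ≠ 0` (otherwise `-Q(v) = v₂²`),
so a shear turns it into the diagonal form `v₀X² + (Q(v)/v₀)Y²`. Two diagonal forms `aX² + bY²`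
and `a'X² + b'Y²` with `ab·a'b'` a nonzero square are equivalent over a finite field of odd order:
`aX² + bY²` represents `a'`, and the square class of the determinant is then forced. For internal
points `v, w` the product `Q(v)Q(w)` is a square because `-Q(v)` and `-Q(w)` are both nonsquares.
-/

open Matrix

/-- The action of the substitution `(X, Y) ↦ (pX + rY, qX + sY)` on `x₀X² + 2x₂XY + x₁Y²`. -/
def sym2Matrix {K : Type*} [CommRing K] (p q r s : K) : Matrix (Fin 3) (Fin 3) K :=
  !![p ^ 2, q ^ 2, 2 * p * q; r ^ 2, s ^ 2, 2 * r * s; p * r, q * s, p * s + q * r]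

section CommRing

variable {K : Type*} [CommRing K]

lemma sym2Matrix_mulVec (p q r s : K) (x : Fin 3 → K) :
    sym2Matrix p q r s *ᵥ x =
      ![p ^ 2 * x 0 + q ^ 2 * x 1 + 2 * p * q * x 2,
        r ^ 2 * x 0 + s ^ 2 * x 1 + 2 * r * s * x 2,
        p * r * x 0 + q * s * x 1 + (p * s + q * r) * x 2] := by
  ext i
  fin_cases i <;> simp [sym2Matrix, mulVec, dotProduct, Fin.sum_univ_three]

lemma det_sym2Matrix (p q r s : K) : (sym2Matrix p q r s).det = (p * s - q * r) ^ 3 := by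
  simp [sym2Matrix, det_fin_three]
  ring

lemma quadForm_sym2Matrix_mulVec (p q r s : K) (x : Fin 3 → K) :
    quadForm K (sym2Matrix p q r s *ᵥ x) = (p * s - q * r) ^ 2 * quadForm K x := by
  simp [sym2Matrix_mulVec, quadForm]
  ring

lemma isSimilitude_sym2Matrix [Nontrivial K] {p q r s : K} (h : IsUnit (p * s - q * r)) :
    IsSimilitude K (sym2Matrix p q r s) := by
  refine ⟨?_, _, (h.pow 2).ne_zero, quadForm_sym2Matrix_mulVec p q r s⟩
  rw [isUnit_iff_isUnit_det, det_sym2Matrix]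
  exact h.pow 3

lemma IsSimilitude.mul [NoZeroDivisors K] {A B : Matrix (Fin 3) (Fin 3) K}
    (hA : IsSimilitude K A) (hB : IsSimilitude K B) : IsSimilitude K (A * B) := by
  obtain ⟨hAu, c, hc, hAc⟩ := hA
  obtain ⟨hBu, c', hc', hBc'⟩ := hB
  refine ⟨hAu.mul hBu, c * c', mul_ne_zero hc hc', fun x => ?_⟩
  rw [← mulVec_mulVec, hAc, hBc', mul_assoc]

lemma sym2Matrix_mulVec_diagonal {a b c x y : K} (t : K) (h : a * x ^ 2 + b * y ^ 2 = c) :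
    sym2Matrix x y (-b * y * t) (a * x * t) *ᵥ ![a, b, 0] = ![c, t ^ 2 * a * b * c, 0] := by
  rw [sym2Matrix_mulVec, ← h]
  ext i
  fin_cases i <;> simp <;> ring

end CommRing

section Field

variable {K : Type*} [Field K]

lemma exists_isSimilitude_mulVec_eq_diagonal {v : Fin 3 → K} (hv : v 0 ≠ 0) :
    ∃ A, IsSimilitude K A ∧ A *ᵥ v = ![v 0, quadForm K v / v 0, 0] := by
  refine ⟨sym2Matrix 1 0 (-v 2 / v 0) 1, isSimilitude_sym2Matrix (by simp), ?_⟩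
  rw [sym2Matrix_mulVec]
  ext i
  fin_cases i <;> simp [quadForm] <;> field_simp <;> ring

lemma exists_isSimilitude_diagonal_mulVec_eq {v : Fin 3 → K} (hv : v 0 ≠ 0) :
    ∃ A, IsSimilitude K A ∧ A *ᵥ ![v 0, quadForm K v / v 0, 0] = v := by
  refine ⟨sym2Matrix 1 0 (v 2 / v 0) 1, isSimilitude_sym2Matrix (by simp), ?_⟩
  rw [sym2Matrix_mulVec]
  ext i
  fin_cases i <;> simp [quadForm] <;> field_simp
  ring

lemma quadForm_ne_zero_of_not_isSquare_neg {v : Fin 3 → K} (hv : ¬IsSquare (-quadForm K v)) :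
    quadForm K v ≠ 0 := by
  rintro h
  exact hv (by simp [h])

lemma apply_zero_ne_zero_of_not_isSquare_neg_quadForm {v : Fin 3 → K}
    (hv : ¬IsSquare (-quadForm K v)) : v 0 ≠ 0 := by
  rintro h
  exact hv ⟨v 2, by simp [quadForm, h, sq]⟩

end Field

section FiniteField

variable {K : Type*} [Field K] [Fintype K]

lemma isSquare_mul_of_not_isSquare {a b : K} (ha : ¬IsSquare a) (hb : ¬IsSquare b) :
    IsSquare (a * b) := by
  have ha0 : a ≠ 0 := by rintro rfl; exact ha IsSquare.zero
  have hb0 : b ≠ 0 := by rintro rfl; exact hb IsSquare.zero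
  classical
  rw [← quadraticChar_one_iff_isSquare (mul_ne_zero ha0 hb0), map_mul,
    quadraticChar_neg_one_iff_not_isSquare.2 ha, quadraticChar_neg_one_iff_not_isSquare.2 hb]
  norm_num

lemma exists_mul_sq_add_mul_sq_eq (hK : Odd (Fintype.card K)) {a b : K} (ha : a ≠ 0)
    (hb : b ≠ 0) (c : K) : ∃ x y, a * x ^ 2 + b * y ^ 2 = c := by
  open Polynomial in
  obtain ⟨x, y, hxy⟩ := FiniteField.exists_root_sum_quadratic
    (f := C a * X ^ 2 + C 0 * X + C 0) (g := C b * X ^ 2 + C 0 * X + C (-c))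
    (degree_quadratic ha) (degree_quadratic hb) (Nat.odd_iff.mp hK)
  refine ⟨x, y, ?_⟩
  simp only [eval_add, eval_mul, eval_pow, eval_C, eval_X] at hxy
  linear_combination hxy

lemma exists_isSimilitude_diagonal_mulVec_diagonal (hK : Odd (Fintype.card K)) {a b a' b' : K}
    (ha : a ≠ 0) (hb : b ≠ 0) (ha' : a' ≠ 0) (hb' : b' ≠ 0) (hsq : IsSquare (a * b * (a' * b'))) :
    ∃ A, IsSimilitude K A ∧ A *ᵥ ![a, b, 0] = ![a', b', 0] := by
  obtain ⟨s, hs⟩ := hsq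
  obtain ⟨x, y, hxy⟩ := exists_mul_sq_add_mul_sq_eq hK ha hb a'
  have habc : a * b * a' ≠ 0 := by simp [*]
  set t := s / (a * b * a')
  have ht2 : t ^ 2 * a * b * a' = b' := by
    simp only [t, div_pow]
    field_simp
    linear_combination -hs
  have ht : t ≠ 0 := by
    rintro h
    simp [h, eq_comm, hb'] at ht2
  refine ⟨_, isSimilitude_sym2Matrix ?_, (sym2Matrix_mulVec_diagonal t hxy).trans (by rw [ht2])⟩
  rw [show x * (a * x * t) - y * (-b * y * t) = t * a' by rw [← hxy]; ring]
  exact (mul_ne_zero ht ha').isUnit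

end FiniteField

/-- The stabilizer of the conic `C` is transitive on the internal points of `C`. -/
theorem similitudes_transitive_on_internal_points
    (K : Type*) [Field K] [Fintype K] (hodd : Odd (Fintype.card K))
    (v w : Fin 3 → K)
    (hv : ¬ IsSquare (-(quadForm K v))) (hw : ¬ IsSquare (-(quadForm K w))) :
    ∃ A : Matrix (Fin 3) (Fin 3) K, IsSimilitude K A ∧
      ∃ lam : K, lam ≠ 0 ∧ A.mulVec v = lam • w := by
  have hv0 := apply_zero_ne_zero_of_not_isSquare_neg_quadForm hv
  have hw0 := apply_zero_ne_zero_of_not_isSquare_neg_quadForm hw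
  have hQv := quadForm_ne_zero_of_not_isSquare_neg hv
  have hQw := quadForm_ne_zero_of_not_isSquare_neg hw
  have hsq : IsSquare (v 0 * (quadForm K v / v 0) * (w 0 * (quadForm K w / w 0))) := by
    rw [mul_div_cancel₀ _ hv0, mul_div_cancel₀ _ hw0]
    simpa using isSquare_mul_of_not_isSquare hv hw
  obtain ⟨A, hA, hAv⟩ := exists_isSimilitude_mulVec_eq_diagonal hv0
  obtain ⟨B, hB, hBw⟩ := exists_isSimilitude_diagonal_mulVec_eq hw0
  obtain ⟨D, hD, hDA⟩ := exists_isSimilitude_diagonal_mulVec_diagonal hodd hv0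
    (div_ne_zero hQv hv0) hw0 (div_ne_zero hQw hw0) hsq
  refine ⟨B * (D * A), hB.mul (hD.mul hA), 1, one_ne_zero, ?_⟩
  rw [one_smul, ← mulVec_mulVec, ← mulVec_mulVec, hAv, hDA, hBw]
end

section
/- The stabilizer of the conic C is transitive on incident pairs consisting of an internal point on an external line: if v, v' ∈ K³ with −Q(v), −Q(v') nonsquares in K, and L, L' are 2-dimensional K-subspaces of K³ containing v and v' respectively, each containing no nonzero isotropic vector of Q, then there exist a similitude A of Q and a nonzero scalar λ ∈ K with A·v = λ·v' and A·L = L'. -/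
namespace SimAux
open Matrix
variable {K : Type*} [Field K]

def Bf (v : Fin 3 → K) : (Fin 3 → K) →ₗ[K] K where
  toFun w := v 0 * w 1 + v 1 * w 0 - 2 * (v 2 * w 2)
  map_add' x y := by simp; ring
  map_smul' c x := by simp; ring

lemma Bf_apply (v w : Fin 3 → K) : Bf v w = v 0 * w 1 + v 1 * w 0 - 2 * (v 2 * w 2) := rfl
lemma Bf_comm (v w : Fin 3 → K) : Bf v w = Bf w v := by simp [Bf_apply]; ring
lemma Bf_self (v : Fin 3 → K) : Bf v v = 2 * quadForm K v := by simp [Bf_apply, quadForm]; ring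
lemma Bf_smul_smul (a b : K) (x y : Fin 3 → K) : Bf (a • x) (b • y) = a * b * Bf x y := by
  simp [Bf_apply]; ring

def Gm (K : Type*) [Field K] : Matrix (Fin 3) (Fin 3) K := !![0,1,0;1,0,0;0,0,-2]

lemma dot_G (x y : Fin 3 → K) : x ⬝ᵥ (Gm K) *ᵥ y = Bf x y := by
  simp [Gm, dotProduct, mulVec, Fin.sum_univ_three, Bf_apply, Matrix.vecHead, Matrix.vecTail]
  ring

def colMat (a b c : Fin 3 → K) : Matrix (Fin 3) (Fin 3) K := Matrix.of fun i j => ![a,b,c] j i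

lemma colMat_mulVec (a b c x : Fin 3 → K) :
    (colMat a b c) *ᵥ x = x 0 • a + x 1 • b + x 2 • c := by
  funext i; simp [colMat, mulVec, dotProduct, Fin.sum_univ_three]; ring

lemma quadForm_smul (c : K) (x : Fin 3 → K) : quadForm K (c • x) = c^2 * quadForm K x := by
  simp [quadForm]; ring

lemma quadForm_smul_add (s t : K) (a b : Fin 3 → K) :
    quadForm K (s • a + t • b) = s^2 * quadForm K a + t^2 * quadForm K b + s * t * Bf a b := by
  simp [quadForm, Bf_apply]; ring

lemma gram (a b c : Fin 3 → K) (hab : Bf a b = 0) (hac : Bf a c = 0) (hbc : Bf b c = 0) :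
    (colMat a b c)ᵀ * Gm K * colMat a b c =
      Matrix.diagonal ![2 * quadForm K a, 2 * quadForm K b, 2 * quadForm K c] := by
  simp only [Bf_apply] at hab hac hbc
  ext i j
  fin_cases i <;> fin_cases j <;>
    simp [colMat, Gm, Matrix.mul_apply, Fin.sum_univ_three, Matrix.diagonal, quadForm,
      Matrix.vecHead, Matrix.vecTail] <;>
    first
      | ring1
      | linear_combination hab
      | linear_combination -hab
      | linear_combination hac
      | linear_combination -hac
      | linear_combination hbc
      | linear_combination -hbc

lemma det_Gm : (Gm K).det = 2 := by
  simp [Gm, Matrix.det_fin_three]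

lemma det_colMat_sq (a b c : Fin 3 → K) (hab : Bf a b = 0) (hac : Bf a c = 0) (hbc : Bf b c = 0) :
    (colMat a b c).det ^ 2 * 2 = 8 * (quadForm K a * (quadForm K b * quadForm K c)) := by
  have h := congrArg Matrix.det (gram a b c hab hac hbc)
  rw [Matrix.det_mul, Matrix.det_mul, Matrix.det_transpose, det_Gm, Matrix.det_diagonal,
    Fin.prod_univ_three] at h
  simp only [Matrix.cons_val_zero, Matrix.cons_val_one, Matrix.head_cons, Matrix.cons_val_two,
    Matrix.tail_cons] at h
  linear_combination h

lemma two_ne_zero_of_odd_card [Fintype K] (hodd : Odd (Fintype.card K)) : (2 : K) ≠ 0 := by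
  intro h2
  have hchar : ringChar K = 2 := CharP.ringChar_of_prime_eq_zero Nat.prime_two h2
  have h := FiniteField.even_card_iff_char_two.mp hchar
  rcases hodd with ⟨k, hk⟩
  omega

lemma ringChar_ne_two_of_odd_card [Fintype K] (hodd : Odd (Fintype.card K)) :
    ringChar K ≠ 2 := by
  intro hchar
  have h := FiniteField.even_card_iff_char_two.mp hchar
  rcases hodd with ⟨k, hk⟩
  omega

lemma exists_frame (two_ne : (2:K) ≠ 0) (v : Fin 3 → K) (L : Submodule K (Fin 3 → K))
    (hQv : quadForm K v ≠ 0) (hL : Module.finrank K L = 2) (hvL : v ∈ L)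
    (hLext : ∀ x ∈ L, x ≠ 0 → quadForm K x ≠ 0) :
    ∃ w u : Fin 3 → K, w ∈ L ∧ w ≠ 0 ∧ Bf v w = 0 ∧ Bf v u = 0 ∧ Bf w u = 0 ∧
      quadForm K u ≠ 0 ∧ L = Submodule.span K {v, w} := by
  have hBvv : Bf v v ≠ 0 := by rw [Bf_self]; exact mul_ne_zero two_ne hQv
  obtain ⟨w₀, hw₀ker, hw₀ne⟩ : ∃ w₀ : L, ((Bf v).comp L.subtype) w₀ = 0 ∧ w₀ ≠ 0 := by
    by_contra h
    push_neg at h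
    have hinj : Function.Injective ((Bf v).comp L.subtype) := by
      rw [← LinearMap.ker_eq_bot, Submodule.eq_bot_iff]
      intro x hx
      by_contra hne
      exact hne (by exact absurd hx (by intro hx0; exact hne (h x hx0)))
    have := LinearMap.finrank_le_finrank_of_injective hinj
    rw [hL, Module.finrank_self] at this
    omega
  set w : Fin 3 → K := (w₀ : Fin 3 → K) with hw
  have hwL : w ∈ L := w₀.2
  have hwne : w ≠ 0 := fun h => hw₀ne (Subtype.ext h)
  have hBvw : Bf v w = 0 := hw₀ker
  have hQw : quadForm K w ≠ 0 := hLext w hwL hwne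
  have hindep : ∀ s t : K, s • v + t • w = 0 → s = 0 ∧ t = 0 := by
    intro s t hst
    have h1 : Bf v (s • v + t • w) = 0 := by rw [hst]; simp
    rw [map_add, _root_.map_smul, _root_.map_smul, hBvw, smul_eq_mul, smul_eq_mul,
      mul_zero, add_zero] at h1
    have hs : s = 0 := by
      rcases mul_eq_zero.mp h1 with h | h
      · exact h
      · exact absurd h hBvv
    refine ⟨hs, ?_⟩
    rw [hs, zero_smul, zero_add] at hst
    rcases smul_eq_zero.mp hst with h | h
    · exact h
    · exact absurd h hwne
  have hLspan : L = Submodule.span K {v, w} := by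
    have hli : LinearIndependent K ![v, w] := LinearIndependent.pair_iff.mpr hindep
    have hrange : Set.range ![v, w] = {v, w} := by
      ext x
      simp [Fin.exists_fin_two]
      tauto
    have hfr : Module.finrank K (Submodule.span K ({v, w} : Set (Fin 3 → K))) = 2 := by
      have := finrank_span_eq_card hli
      rwa [hrange, Fintype.card_fin] at this
    have hle : Submodule.span K ({v, w} : Set (Fin 3 → K)) ≤ L := by
      rw [Submodule.span_le]
      rintro x (rfl | rfl)
      · exact hvL
      · exact hwL
    exact (Submodule.eq_of_le_of_finrank_le hle (le_of_eq (hL.trans hfr.symm))).symm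
  obtain ⟨u, hukernz⟩ : ∃ u : Fin 3 → K, u ∈ LinearMap.ker ((Bf v).prod (Bf w)) ∧ u ≠ 0 := by
    by_contra h
    push_neg at h
    have hinj : Function.Injective ((Bf v).prod (Bf w)) := by
      rw [← LinearMap.ker_eq_bot, Submodule.eq_bot_iff]
      intro x hx
      by_contra hne
      exact hne (h x hx)
    have := LinearMap.finrank_le_finrank_of_injective hinj
    rw [Module.finrank_fin_fun, Module.finrank_prod, Module.finrank_self] at this
    omega
  obtain ⟨huker, hune⟩ := hukernz
  simp only [LinearMap.mem_ker, LinearMap.prod_apply, Pi.prod, Prod.mk_eq_zero] at huker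
  have hBvu : Bf v u = 0 := congrArg Prod.fst huker
  have hBwu : Bf w u = 0 := congrArg Prod.snd huker
  refine ⟨w, u, hwL, hwne, hBvw, hBvu, hBwu, ?_, hLspan⟩
  intro hQu
  by_cases huL : u ∈ L
  · exact hLext u huL hune hQu
  · have hBuu : Bf u u = 0 := by rw [Bf_self, hQu, mul_zero]
    have hlt : L < L ⊔ Submodule.span K {u} := by
      refine lt_of_le_of_ne le_sup_left ?_
      intro heq
      exact huL (heq ▸ Submodule.mem_sup_right (Submodule.mem_span_singleton_self u))
    have hfr3 : Module.finrank K (Fin 3 → K) = 3 := Module.finrank_fin_fun K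
    have hlt2 : 2 < Module.finrank K (L ⊔ Submodule.span K {u} : Submodule K (Fin 3 → K)) := by
      rw [← hL]
      exact Submodule.finrank_lt_finrank_of_lt hlt
    have hle3 : Module.finrank K (L ⊔ Submodule.span K {u} : Submodule K (Fin 3 → K)) ≤ 3 := by
      simpa [hfr3] using Submodule.finrank_le (L ⊔ Submodule.span K {u})
    have htop : L ⊔ Submodule.span K {u} = ⊤ := by
      apply Submodule.eq_top_of_finrank_eq
      rw [hfr3]; omega
    have hker : (⊤ : Submodule K (Fin 3 → K)) ≤ LinearMap.ker (Bf u) := by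
      rw [← htop]
      apply sup_le
      · rw [hLspan, Submodule.span_le]
        rintro x (rfl | rfl)
        · rw [SetLike.mem_coe, LinearMap.mem_ker, ← Bf_comm]; exact hBvu
        · rw [SetLike.mem_coe, LinearMap.mem_ker, ← Bf_comm]; exact hBwu
      · rw [Submodule.span_le]
        rintro x rfl
        rw [SetLike.mem_coe, LinearMap.mem_ker]; exact hBuu
    have hall : ∀ x : Fin 3 → K, Bf u x = 0 := fun x => hker (Submodule.mem_top)
    have h0 : u 1 = 0 := by have := hall (Pi.single 0 1); simpa [Bf_apply] using this
    have h1 : u 0 = 0 := by have := hall (Pi.single 1 1); simpa [Bf_apply] using this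
    have h2 : u 2 = 0 := by
      have := hall (Pi.single 2 1)
      simp [Bf_apply] at this
      rcases this with h | h
      · exact absurd h two_ne
      · exact h
    apply hune
    funext i
    fin_cases i <;> assumption

/-- anisotropy of the line makes `-(Q w * Q v)` a nonsquare -/
lemma nonsquare_of_external (two_ne : (2:K) ≠ 0) (v w : Fin 3 → K) (L : Submodule K (Fin 3 → K))
    (hvL : v ∈ L) (hwL : w ∈ L) (hwne : w ≠ 0) (hQv : quadForm K v ≠ 0)
    (hBvw : Bf v w = 0)
    (hLext : ∀ x ∈ L, x ≠ 0 → quadForm K x ≠ 0) :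
    ¬ IsSquare (-(quadForm K w * quadForm K v)) := by
  have hQw : quadForm K w ≠ 0 := hLext w hwL hwne
  rintro ⟨t, ht⟩
  set x := t • v + quadForm K v • w with hx
  have hxL : x ∈ L := L.add_mem (L.smul_mem _ hvL) (L.smul_mem _ hwL)
  have hQx : quadForm K x = 0 := by
    rw [hx, quadForm_smul_add, hBvw]
    linear_combination -quadForm K v * ht
  have hx0 : x = 0 := by
    by_contra hne
    exact hLext x hxL hne hQx
  have hBvx : Bf v x = 0 := by rw [hx0]; simp
  rw [hx, map_add, _root_.map_smul, _root_.map_smul, hBvw, Bf_self] at hBvx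
  simp only [smul_eq_mul, mul_zero, add_zero] at hBvx
  have ht0 : t = 0 := by
    rcases mul_eq_zero.mp hBvx with h | h
    · exact h
    · exact absurd h (mul_ne_zero two_ne hQv)
  rw [ht0, mul_zero] at ht
  exact (mul_ne_zero hQw hQv) (neg_eq_zero.mp ht)

end SimAux

open SimAux Matrix in
/-- The stabilizer of the conic `C` is transitive on incident pairs consisting of an
internal point on an external line. -/
theorem similitudes_transitive_on_internal_point_external_line_pairs
    (K : Type*) [Field K] [Fintype K] (hodd : Odd (Fintype.card K))
    (v v' : Fin 3 → K)
    (hv : ¬ IsSquare (-(quadForm K v))) (hv' : ¬ IsSquare (-(quadForm K v')))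
    (L L' : Submodule K (Fin 3 → K))
    (hL : Module.finrank K L = 2) (hL' : Module.finrank K L' = 2)
    (hvL : v ∈ L) (hv'L' : v' ∈ L')
    (hLext : ∀ x ∈ L, x ≠ 0 → quadForm K x ≠ 0)
    (hL'ext : ∀ x ∈ L', x ≠ 0 → quadForm K x ≠ 0) :
    ∃ A : Matrix (Fin 3) (Fin 3) K, IsSimilitude K A ∧
      (∃ lam : K, lam ≠ 0 ∧ A.mulVec v = lam • v') ∧
      L.map A.mulVecLin = L' := by
  classical
  have two_ne : (2:K) ≠ 0 := two_ne_zero_of_odd_card hodd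
  have hchar : ringChar K ≠ 2 := ringChar_ne_two_of_odd_card hodd
  have hQv : quadForm K v ≠ 0 := by
    intro h; exact hv (by rw [h, neg_zero]; exact ⟨0, by simp⟩)
  have hQv' : quadForm K v' ≠ 0 := by
    intro h; exact hv' (by rw [h, neg_zero]; exact ⟨0, by simp⟩)
  obtain ⟨w, u, hwL, hwne, hBvw, hBvu, hBwu, hQu, hLspan⟩ :=
    exists_frame two_ne v L hQv hL hvL hLext
  obtain ⟨w', u', hw'L', hw'ne, hBvw', hBvu', hBwu', hQu', hL'span⟩ :=
    exists_frame two_ne v' L' hQv' hL' hv'L' hL'ext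
  have hQw : quadForm K w ≠ 0 := hLext w hwL hwne
  have hQw' : quadForm K w' ≠ 0 := hL'ext w' hw'L' hw'ne
  -- quadratic character bookkeeping
  set χ := quadraticChar K with hχ
  set n := χ (-1) with hn
  set av := χ (quadForm K v) with hav0
  set av' := χ (quadForm K v') with hav'0
  set aw := χ (quadForm K w) with haw0
  set aw' := χ (quadForm K w') with haw'0
  set au := χ (quadForm K u) with hau0
  set au' := χ (quadForm K u') with hau'0
  have hm1 : (-1 : K) ≠ 0 := by norm_num
  have Sn : n^2 = 1 := quadraticChar_sq_one hm1
  have E1 : n * av = -1 := by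
    have h := quadraticChar_neg_one_iff_not_isSquare.mpr hv
    rw [show -(quadForm K v) = -1 * quadForm K v by ring, _root_.map_mul] at h
    exact h
  have E2 : n * av' = -1 := by
    have h := quadraticChar_neg_one_iff_not_isSquare.mpr hv'
    rw [show -(quadForm K v') = -1 * quadForm K v' by ring, _root_.map_mul] at h
    exact h
  have E3 : n * (aw * av) = -1 := by
    have h := quadraticChar_neg_one_iff_not_isSquare.mpr
      (nonsquare_of_external two_ne v w L hvL hwL hwne hQv hBvw hLext)
    rw [show -(quadForm K w * quadForm K v) = -1 * (quadForm K w * quadForm K v) by ring,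
      _root_.map_mul, _root_.map_mul] at h
    exact h
  have E4 : n * (aw' * av') = -1 := by
    have h := quadraticChar_neg_one_iff_not_isSquare.mpr
      (nonsquare_of_external two_ne v' w' L' hv'L' hw'L' hw'ne hQv' hBvw' hL'ext)
    rw [show -(quadForm K w' * quadForm K v') = -1 * (quadForm K w' * quadForm K v') by ring,
      _root_.map_mul, _root_.map_mul] at h
    exact h
  -- discriminant relations
  set P : Matrix (Fin 3) (Fin 3) K := colMat v w u with hP
  set P' : Matrix (Fin 3) (Fin 3) K := colMat v' w' u' with hP'
  have hdet : P.det ^ 2 * 2 = 8 * (quadForm K v * (quadForm K w * quadForm K u)) :=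
    det_colMat_sq v w u hBvw hBvu hBwu
  have hdet' : P'.det ^ 2 * 2 = 8 * (quadForm K v' * (quadForm K w' * quadForm K u')) :=
    det_colMat_sq v' w' u' hBvw' hBvu' hBwu'
  have h8 : (8:K) ≠ 0 := by
    have h83 : (8:K) = 2^3 := by norm_num
    rw [h83]; exact pow_ne_zero _ two_ne
  have hdP : P.det ≠ 0 := by
    intro h
    have hz : (8:K) * (quadForm K v * (quadForm K w * quadForm K u)) = 0 := by
      rw [← hdet, h]; ring
    exact (mul_ne_zero h8 (mul_ne_zero hQv (mul_ne_zero hQw hQu))) hz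
  have hdP' : P'.det ≠ 0 := by
    intro h
    have hz : (8:K) * (quadForm K v' * (quadForm K w' * quadForm K u')) = 0 := by
      rw [← hdet', h]; ring
    exact (mul_ne_zero h8 (mul_ne_zero hQv' (mul_ne_zero hQw' hQu'))) hz
  have E5 : av * (aw * au) = 1 := by
    have h2 : P.det ^ 2 = 4 * (quadForm K v * (quadForm K w * quadForm K u)) := by
      apply mul_right_cancel₀ two_ne
      linear_combination hdet
    have hsq : IsSquare (quadForm K v * (quadForm K w * quadForm K u)) := by
      refine ⟨P.det / 2, ?_⟩
      rw [div_mul_div_comm, eq_div_iff (mul_ne_zero two_ne two_ne)]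
      linear_combination -h2
    have hne : quadForm K v * (quadForm K w * quadForm K u) ≠ 0 :=
      mul_ne_zero hQv (mul_ne_zero hQw hQu)
    have h := (quadraticChar_one_iff_isSquare hne).mpr hsq
    rwa [_root_.map_mul, _root_.map_mul] at h
  have E6 : av' * (aw' * au') = 1 := by
    have h2 : P'.det ^ 2 = 4 * (quadForm K v' * (quadForm K w' * quadForm K u')) := by
      apply mul_right_cancel₀ two_ne
      linear_combination hdet'
    have hsq : IsSquare (quadForm K v' * (quadForm K w' * quadForm K u')) := by
      refine ⟨P'.det / 2, ?_⟩
      rw [div_mul_div_comm, eq_div_iff (mul_ne_zero two_ne two_ne)]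
      linear_combination -h2
    have hne : quadForm K v' * (quadForm K w' * quadForm K u') ≠ 0 :=
      mul_ne_zero hQv' (mul_ne_zero hQw' hQu')
    have h := (quadraticChar_one_iff_isSquare hne).mpr hsq
    rwa [_root_.map_mul, _root_.map_mul] at h
  -- solve character values
  have hav : av = -n := by linear_combination n * E1 - av * Sn
  have hav' : av' = -n := by linear_combination n * E2 - av' * Sn
  have haw : aw = 1 := by linear_combination -E3 + (n*aw) * hav - aw * Sn
  have haw' : aw' = 1 := by linear_combination -E4 + (n*aw') * hav' - aw' * Sn
  have hau : au = -n := by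
    have h5 : av * au = 1 := by linear_combination E5 - (av*au) * haw
    linear_combination -n * h5 + (n*au) * hav - au * Sn
  have hau' : au' = -n := by
    have h5 : av' * au' = 1 := by linear_combination E6 - (av'*au') * haw'
    linear_combination -n * h5 + (n*au') * hav' - au' * Sn
  -- the two squares we need
  have hQww' : quadForm K w * quadForm K w' ≠ 0 := mul_ne_zero hQw hQw'
  have hQuu' : quadForm K u * quadForm K u' ≠ 0 := mul_ne_zero hQu hQu'
  have hQvv' : quadForm K v * quadForm K v' ≠ 0 := mul_ne_zero hQv hQv'
  have hsq1 : IsSquare (quadForm K v * quadForm K v' * (quadForm K w * quadForm K w')) := by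
    have hne : quadForm K v * quadForm K v' * (quadForm K w * quadForm K w') ≠ 0 :=
      mul_ne_zero hQvv' hQww'
    refine (quadraticChar_one_iff_isSquare hne).mp ?_
    rw [_root_.map_mul, _root_.map_mul, _root_.map_mul, ← hav0, ← hav'0, ← haw0, ← haw'0,
      hav, hav', haw, haw']
    linear_combination Sn
  have hsq2 : IsSquare (quadForm K v * quadForm K v' * (quadForm K u * quadForm K u')) := by
    have hne : quadForm K v * quadForm K v' * (quadForm K u * quadForm K u') ≠ 0 :=
      mul_ne_zero hQvv' hQuu'
    refine (quadraticChar_one_iff_isSquare hne).mp ?_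
    rw [_root_.map_mul, _root_.map_mul, _root_.map_mul, ← hav0, ← hav'0, ← hau0, ← hau'0,
      hav, hav', hau, hau']
    linear_combination (n^2+1) * Sn
  -- square roots
  obtain ⟨s, hs⟩ := hsq1
  obtain ⟨t, ht⟩ := hsq2
  have hsne : s ≠ 0 := by
    intro h
    rw [h, mul_zero] at hs
    exact (mul_ne_zero hQvv' hQww') hs
  have htne : t ≠ 0 := by
    intro h
    rw [h, mul_zero] at ht
    exact (mul_ne_zero hQvv' hQuu') ht
  set μ := s / quadForm K w' with hμdef
  set ν := t / quadForm K u' with hνdef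
  have hμne : μ ≠ 0 := div_ne_zero hsne hQw'
  have hνne : ν ≠ 0 := div_ne_zero htne hQu'
  have hμ2 : μ^2 * quadForm K w' = quadForm K v * quadForm K v' * quadForm K w := by
    rw [hμdef, div_pow, div_mul_eq_mul_div, div_eq_iff (pow_ne_zero 2 hQw')]
    linear_combination -quadForm K w' * hs
  have hν2 : ν^2 * quadForm K u' = quadForm K v * quadForm K v' * quadForm K u := by
    rw [hνdef, div_pow, div_mul_eq_mul_div, div_eq_iff (pow_ne_zero 2 hQu')]
    linear_combination -quadForm K u' * ht
  -- the matrices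
  set P'' : Matrix (Fin 3) (Fin 3) K :=
    colMat (quadForm K v • v') (μ • w') (ν • u') with hP''
  have g1 : Pᵀ * Gm K * P =
      Matrix.diagonal ![2 * quadForm K v, 2 * quadForm K w, 2 * quadForm K u] :=
    gram v w u hBvw hBvu hBwu
  have g2 : P''ᵀ * Gm K * P'' =
      Matrix.diagonal ![2 * quadForm K (quadForm K v • v'), 2 * quadForm K (μ • w'),
        2 * quadForm K (ν • u')] :=
    gram _ _ _ (by rw [Bf_smul_smul, hBvw', mul_zero]) (by rw [Bf_smul_smul, hBvu', mul_zero])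
      (by rw [Bf_smul_smul, hBwu', mul_zero])
  have d2 : Matrix.diagonal ![2 * quadForm K (quadForm K v • v'), 2 * quadForm K (μ • w'),
        2 * quadForm K (ν • u')] =
      (quadForm K v * quadForm K v') •
        Matrix.diagonal ![2 * quadForm K v, 2 * quadForm K w, 2 * quadForm K u] := by
    have dvec : ![2 * quadForm K (quadForm K v • v'), 2 * quadForm K (μ • w'),
          2 * quadForm K (ν • u')] =
        (quadForm K v * quadForm K v') •
          ![2 * quadForm K v, 2 * quadForm K w, 2 * quadForm K u] := by
      funext i
      fin_cases i <;>
        simp [quadForm_smul] <;>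
        first
          | ring1
          | linear_combination 2 * hμ2
          | linear_combination 2 * hν2
    rw [dvec, Matrix.diagonal_smul]
  have hmid : P''ᵀ * Gm K * P'' =
      (quadForm K v * quadForm K v') • (Pᵀ * Gm K * P) := by
    rw [g2, d2, g1]
  have hUdet : IsUnit P.det := isUnit_iff_ne_zero.mpr hdP
  have hUdetT : IsUnit Pᵀ.det := by rw [Matrix.det_transpose]; exact hUdet
  have hUP : IsUnit P := (Matrix.isUnit_iff_isUnit_det P).mpr hUdet
  have hUPT : IsUnit Pᵀ := (Matrix.isUnit_iff_isUnit_det Pᵀ).mpr hUdetT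
  have hq1 : quadForm K (quadForm K v • v') ≠ 0 := by
    rw [quadForm_smul]; exact mul_ne_zero (pow_ne_zero _ hQv) hQv'
  have hq2 : quadForm K (μ • w') ≠ 0 := by
    rw [quadForm_smul]; exact mul_ne_zero (pow_ne_zero _ hμne) hQw'
  have hq3 : quadForm K (ν • u') ≠ 0 := by
    rw [quadForm_smul]; exact mul_ne_zero (pow_ne_zero _ hνne) hQu'
  have hdP'' : P''.det ≠ 0 := by
    have hd := det_colMat_sq (quadForm K v • v') (μ • w') (ν • u')
      (by rw [Bf_smul_smul, hBvw', mul_zero]) (by rw [Bf_smul_smul, hBvu', mul_zero])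
      (by rw [Bf_smul_smul, hBwu', mul_zero])
    intro h0
    rw [← hP''] at hd
    have hz : (8:K) * (quadForm K (quadForm K v • v') *
        (quadForm K (μ • w') * quadForm K (ν • u'))) = 0 := by
      rw [← hd, h0]; ring
    exact (mul_ne_zero h8 (mul_ne_zero hq1 (mul_ne_zero hq2 hq3))) hz
  set A := P'' * P⁻¹ with hA
  have hUnitA : IsUnit A := by
    rw [Matrix.isUnit_iff_isUnit_det, hA, Matrix.det_mul]
    refine (isUnit_iff_ne_zero.mpr hdP'').mul ?_
    rw [Matrix.det_nonsing_inv]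
    exact isUnit_ringInverse.mpr hUdet
  have hAP : A * P = P'' := by
    rw [hA, Matrix.mul_assoc, Matrix.nonsing_inv_mul P hUdet, Matrix.mul_one]
  clear hA
  clear_value A
  have hkey : Pᵀ * (Aᵀ * Gm K * A) * P =
      Pᵀ * ((quadForm K v * quadForm K v') • Gm K) * P := by
    calc Pᵀ * (Aᵀ * Gm K * A) * P = (A * P)ᵀ * Gm K * (A * P) := by
          rw [Matrix.transpose_mul A P]; simp only [Matrix.mul_assoc]
      _ = P''ᵀ * Gm K * P'' := by rw [hAP]
      _ = (quadForm K v * quadForm K v') • (Pᵀ * Gm K * P) := hmid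
      _ = Pᵀ * ((quadForm K v * quadForm K v') • Gm K) * P := by
          simp only [Matrix.smul_mul, Matrix.mul_smul]
  have hAG : Aᵀ * Gm K * A = (quadForm K v * quadForm K v') • Gm K := by
    have h1 := hUPT.mul_left_cancel
      (by simpa only [Matrix.mul_assoc] using hkey :
        Pᵀ * ((Aᵀ * Gm K * A) * P) = Pᵀ * (((quadForm K v * quadForm K v') • Gm K) * P))
    exact hUP.mul_right_cancel h1
  -- similitude property
  have hsim : ∀ x : Fin 3 → K,
      quadForm K (A.mulVec x) = (quadForm K v * quadForm K v') * quadForm K x := by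
    intro x
    apply mul_left_cancel₀ two_ne
    have e1 : (A *ᵥ x) ⬝ᵥ (Gm K) *ᵥ (A *ᵥ x) = 2 * quadForm K (A *ᵥ x) := by
      rw [dot_G, Bf_self]
    have e2 : x ⬝ᵥ (Gm K) *ᵥ x = 2 * quadForm K x := by rw [dot_G, Bf_self]
    have e3 : x ⬝ᵥ ((Aᵀ * (Gm K * A)) *ᵥ x) = (A *ᵥ x) ⬝ᵥ (Gm K) *ᵥ (A *ᵥ x) := by
      rw [← Matrix.mulVec_mulVec, Matrix.dotProduct_mulVec, Matrix.vecMul_transpose,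
        ← Matrix.mulVec_mulVec]
    calc 2 * quadForm K (A *ᵥ x) = (A *ᵥ x) ⬝ᵥ (Gm K) *ᵥ (A *ᵥ x) := e1.symm
      _ = x ⬝ᵥ ((Aᵀ * (Gm K * A)) *ᵥ x) := e3.symm
      _ = x ⬝ᵥ (((quadForm K v * quadForm K v') • Gm K) *ᵥ x) := by
          rw [← Matrix.mul_assoc, hAG]
      _ = (quadForm K v * quadForm K v') * (x ⬝ᵥ (Gm K) *ᵥ x) := by
          rw [Matrix.smul_mulVec, dotProduct_smul, smul_eq_mul]
      _ = 2 * (quadForm K v * quadForm K v' * quadForm K x) := by rw [e2]; ring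
  -- images of v and w
  have hPe0 : P *ᵥ Pi.single 0 1 = v := by
    rw [hP, colMat_mulVec]
    simp
  have hPe1 : P *ᵥ Pi.single 1 1 = w := by
    rw [hP, colMat_mulVec]
    simp
  have hAPm : ∀ y e : Fin 3 → K, P *ᵥ e = y → A *ᵥ y = P'' *ᵥ e := by
    intro y e hy
    rw [← hy, Matrix.mulVec_mulVec, hAP]
  have hAv : A *ᵥ v = quadForm K v • v' := by
    rw [hAPm v (Pi.single 0 1) hPe0, hP'', colMat_mulVec]
    simp
  have hAw : A *ᵥ w = μ • w' := by
    rw [hAPm w (Pi.single 1 1) hPe1, hP'', colMat_mulVec]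
    simp
  refine ⟨A, ⟨hUnitA, quadForm K v * quadForm K v', hQvv', hsim⟩,
    ⟨quadForm K v, hQv, hAv⟩, ?_⟩
  rw [hLspan, Submodule.map_span]
  have himg : A.mulVecLin '' ({v, w} : Set (Fin 3 → K)) =
      {quadForm K v • v', μ • w'} := by
    rw [Set.image_pair]
    simp only [Matrix.mulVecLin_apply, hAv, hAw]
  rw [himg, hL'span]
  rw [show ({quadForm K v • v', μ • w'} : Set (Fin 3 → K)) =
      insert (quadForm K v • v') {μ • w'} from rfl,
    Submodule.span_insert, Submodule.span_singleton_smul_eq (isUnit_iff_ne_zero.mpr hQv) v',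
    Submodule.span_singleton_smul_eq (isUnit_iff_ne_zero.mpr hμne) w',
    ← Submodule.span_insert]
end

section
/- Let K be a finite field of odd order s. The group of similitudes of Q modulo its subgroup of nonzero scalar matrices has order s·(s² − 1). -/
open Matrix

/-- The group of similitudes of `Q`, as a subgroup of `GL(3,K)`: those `A` with
`Q(A·x) = c·Q(x)` for all `x`, for some `c ∈ K*`. -/
def similitudeGroup (K : Type*) [Field K] : Subgroup (GL (Fin 3) K) where
  carrier := {A | ∃ c : K, c ≠ 0 ∧
    ∀ x : Fin 3 → K, quadForm K ((A : Matrix (Fin 3) (Fin 3) K).mulVec x) = c * quadForm K x}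
  mul_mem' := by
    rintro A B ⟨c, hc, hA⟩ ⟨d, hd, hB⟩
    refine ⟨c * d, mul_ne_zero hc hd, fun x => ?_⟩
    have h : ((A * B : GL (Fin 3) K) : Matrix (Fin 3) (Fin 3) K)
        = (A : Matrix (Fin 3) (Fin 3) K) * (B : Matrix (Fin 3) (Fin 3) K) := rfl
    rw [h, ← Matrix.mulVec_mulVec, hA, hB, mul_assoc]
  one_mem' := ⟨1, one_ne_zero, fun x => by
    have h : ((1 : GL (Fin 3) K) : Matrix (Fin 3) (Fin 3) K) = 1 := rfl
    rw [h, Matrix.one_mulVec, one_mul]⟩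
  inv_mem' := by
    rintro A ⟨c, hc, hA⟩
    refine ⟨c⁻¹, inv_ne_zero hc, fun x => ?_⟩
    have h : (A : Matrix (Fin 3) (Fin 3) K).mulVec
        (((A⁻¹ : GL (Fin 3) K) : Matrix (Fin 3) (Fin 3) K).mulVec x) = x := by
      rw [Matrix.mulVec_mulVec]
      have : (A : Matrix (Fin 3) (Fin 3) K) * ((A⁻¹ : GL (Fin 3) K) : Matrix (Fin 3) (Fin 3) K)
          = 1 := A.mul_inv
      rw [this, Matrix.one_mulVec]
    have h2 := hA (((A⁻¹ : GL (Fin 3) K) : Matrix (Fin 3) (Fin 3) K).mulVec x)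
    rw [h] at h2
    rw [h2]
    field_simp
  
/-- The subgroup of nonzero scalar matrices inside `GL(3,K)`. -/
def scalarSubgroup (K : Type*) [Field K] : Subgroup (GL (Fin 3) K) where
  carrier := {A | ∃ μ : K, μ ≠ 0 ∧ (A : Matrix (Fin 3) (Fin 3) K) = μ • (1 : Matrix (Fin 3) (Fin 3) K)}
  mul_mem' := by
    rintro A B ⟨μ, hμ, hA⟩ ⟨ν, hν, hB⟩
    refine ⟨μ * ν, mul_ne_zero hμ hν, ?_⟩
    have h : ((A * B : GL (Fin 3) K) : Matrix (Fin 3) (Fin 3) K)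
        = (A : Matrix (Fin 3) (Fin 3) K) * (B : Matrix (Fin 3) (Fin 3) K) := rfl
    rw [h, hA, hB, smul_mul_smul_comm, one_mul]
  one_mem' := ⟨1, one_ne_zero, by simp⟩
  inv_mem' := by
    rintro A ⟨μ, hμ, hA⟩
    refine ⟨μ⁻¹, inv_ne_zero hμ, ?_⟩
    have h : ((A⁻¹ : GL (Fin 3) K) : Matrix (Fin 3) (Fin 3) K)
        = (A : Matrix (Fin 3) (Fin 3) K)⁻¹ := (Matrix.coe_units_inv A)
    rw [h, hA]
    exact Matrix.inv_eq_left_inv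
      (by rw [smul_mul_smul_comm, one_mul, inv_mul_cancel₀ hμ, one_smul])
  
/-!
Identify `x ∈ K³` with the symmetric matrix `S = [[x₀, x₂], [x₂, x₁]]`, so that `Q(x) = det S`.
Then `g ∈ GL(2,K)` acts by `S ↦ g S gᵀ`, a similitude with multiplier `(det g)²`. Conversely, when
`2 ≠ 0`, every similitude `A` is a scalar multiple of such an image: `Aᵀ` is a similitude of the
dual form `4y₀y₁ - y₂²` (its Gram matrix is the adjugate of that of `Q`), so the first column of `A`
is isotropic for `Q` and its first row for the dual form, and these two vectors determine `g`.
Since `S ↦ g S gᵀ` is scalar exactly when `g` is, the similitudes modulo scalars form a copy of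
`PGL(2,K)`, of order `(s² - 1)(s² - s)/(s - 1) = s(s² - 1)`.
-/

theorem Matrix.GeneralLinearGroup.card_center {n R : Type*} [Fintype n] [DecidableEq n]
    [Nonempty n] [CommRing R] : Nat.card (Subgroup.center (GL n R)) = Nat.card Rˣ := by
  rw [center_eq_range_scalar]
  refine (Nat.card_congr (MonoidHom.ofInjective fun u v huv => ?_).toEquiv).symm
  exact Units.ext (scalar_inj.mp (congrArg Units.val huv))

section SymSquare

variable {R : Type*} [CommRing R]

/-- In the coordinates above, `symSquare m` is the matrix of `S ↦ m S mᵀ`. -/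
def symSquare (m : Matrix (Fin 2) (Fin 2) R) : Matrix (Fin 3) (Fin 3) R :=
  !![m 0 0 ^ 2, m 0 1 ^ 2, 2 * m 0 0 * m 0 1;
     m 1 0 ^ 2, m 1 1 ^ 2, 2 * m 1 0 * m 1 1;
     m 0 0 * m 1 0, m 0 1 * m 1 1, m 0 0 * m 1 1 + m 0 1 * m 1 0]

theorem symSquare_one : symSquare (1 : Matrix (Fin 2) (Fin 2) R) = 1 := by
  ext i j
  fin_cases i <;> fin_cases j <;> simp [symSquare, one_apply]

theorem symSquare_mul (m n : Matrix (Fin 2) (Fin 2) R) :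
    symSquare (m * n) = symSquare m * symSquare n := by
  ext i j
  fin_cases i <;> fin_cases j <;>
    simp only [Fin.zero_eta, Fin.mk_one, Fin.reduceFinMk, symSquare, mul_apply, Fin.sum_univ_two,
      Fin.sum_univ_three, of_apply, cons_val] <;>
    ring

theorem det_symSquare (m : Matrix (Fin 2) (Fin 2) R) : (symSquare m).det = m.det ^ 3 := by
  simp only [symSquare, det_fin_three, det_fin_two, of_apply, cons_val]
  ring

theorem quadForm_symSquare_mulVec (m : Matrix (Fin 2) (Fin 2) R) (x : Fin 3 → R) :
    quadForm R (symSquare m *ᵥ x) = m.det ^ 2 * quadForm R x := by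
  simp only [quadForm, symSquare, mulVec, dotProduct, Fin.sum_univ_three, det_fin_two, of_apply,
    cons_val]
  ring

theorem symSquare_scalar (t : R) : symSquare (scalar (Fin 2) t) = scalar (Fin 3) (t ^ 2) := by
  ext i j
  fin_cases i <;> fin_cases j <;> simp [symSquare, sq]

theorem symSquare_mem_range_scalar_iff [IsReduced R] {m : Matrix (Fin 2) (Fin 2) R} :
    symSquare m ∈ Set.range (scalar (Fin 3)) ↔ m ∈ Set.range (scalar (Fin 2)) := by
  refine ⟨fun ⟨μ, hμ⟩ => ?_, fun ⟨t, ht⟩ => ⟨t ^ 2, by rw [← ht, symSquare_scalar]⟩⟩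
  have entry (i j : Fin 3) := congr_fun₂ hμ i j
  have h01 : m 0 1 = 0 := IsReduced.eq_zero _ ⟨2, by simpa [symSquare] using (entry 0 1).symm⟩
  have h10 : m 1 0 = 0 := IsReduced.eq_zero _ ⟨2, by simpa [symSquare] using (entry 1 0).symm⟩
  have h11 : m 1 1 = m 0 0 := by
    have h00 : μ = m 0 0 ^ 2 := by simpa [symSquare] using entry 0 0
    have h11 : μ = m 1 1 ^ 2 := by simpa [symSquare] using entry 1 1
    have h22 : μ = m 0 0 * m 1 1 := by simpa [symSquare, h01] using entry 2 2
    rw [← sub_eq_zero]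
    exact IsReduced.eq_zero _ ⟨2, by linear_combination 2 * h22 - h00 - h11⟩
  refine ⟨m 0 0, ?_⟩
  ext i j
  fin_cases i <;> fin_cases j <;> simp [h01, h10, h11]

variable (R) in
def symSquareHom : Matrix (Fin 2) (Fin 2) R →* Matrix (Fin 3) (Fin 3) R where
  toFun := symSquare
  map_one' := symSquare_one
  map_mul' := symSquare_mul

variable (R) in
def symSquareGL : GL (Fin 2) R →* GL (Fin 3) R := Units.map (symSquareHom R)

@[simp]
theorem coe_symSquareGL (g : GL (Fin 2) R) :
    (symSquareGL R g : Matrix (Fin 3) (Fin 3) R) = symSquare (g : Matrix (Fin 2) (Fin 2) R) :=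
  rfl

theorem symSquareGL_mem_center_iff [IsReduced R] {g : GL (Fin 2) R} :
    symSquareGL R g ∈ Subgroup.center (GL (Fin 3) R) ↔
      g ∈ Subgroup.center (GL (Fin 2) R) := by
  simp only [GeneralLinearGroup.mem_center_iff_val_mem_range_scalar, coe_symSquareGL,
    symSquare_mem_range_scalar_iff]

end SymSquare

section Polarization

variable {R : Type*} [CommRing R]

variable (R) in
def polarMatrix : Matrix (Fin 3) (Fin 3) R := !![0, 1, 0; 1, 0, 0; 0, 0, -2]

variable (R) in
def dualQuadForm (y : Fin 3 → R) : R := 4 * y 0 * y 1 - y 2 ^ 2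

theorem dotProduct_polarMatrix_mulVec (x y : Fin 3 → R) :
    x ⬝ᵥ polarMatrix R *ᵥ y = quadForm R (x + y) - quadForm R x - quadForm R y := by
  simp only [polarMatrix, quadForm, mulVec, dotProduct, Fin.sum_univ_three, of_apply, cons_val,
    Pi.add_apply]
  ring

theorem transpose_mul_polarMatrix_mul {M : Matrix (Fin 3) (Fin 3) R} {γ : R}
    (hM : ∀ x, quadForm R (M *ᵥ x) = γ * quadForm R x) :
    Mᵀ * polarMatrix R * M = γ • polarMatrix R := by
  have bilin (x y : Fin 3 → R) :
      x ⬝ᵥ (Mᵀ * polarMatrix R * M) *ᵥ y = x ⬝ᵥ (γ • polarMatrix R) *ᵥ y := by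
    rw [← mulVec_mulVec, ← mulVec_mulVec, dotProduct_mulVec, vecMul_transpose,
      dotProduct_polarMatrix_mulVec, ← mulVec_add, hM, hM, hM, smul_mulVec, dotProduct_smul,
      dotProduct_polarMatrix_mulVec, smul_eq_mul]
    ring
  ext i j
  simpa [single_one_dotProduct, mulVec_single_one] using bilin (Pi.single i 1) (Pi.single j 1)

theorem det_polarMatrix : (polarMatrix R).det = 2 := by
  simp only [polarMatrix, det_fin_three, of_apply, cons_val]
  ring

theorem dualQuadForm_eq_dotProduct_adjugate_mulVec (y : Fin 3 → R) :
    dualQuadForm R y = y ⬝ᵥ adjugate (polarMatrix R) *ᵥ y := by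
  simp only [dualQuadForm, polarMatrix, adjugate_fin_three, mulVec, dotProduct,
    Fin.sum_univ_three, of_apply, cons_val]
  ring

theorem Matrix.mul_adjugate_mul_transpose_eq {n : Type*} [Fintype n] [DecidableEq n]
    {M N : Matrix n n R} {γ : R} (hM : IsUnit M.det) (hN : IsUnit N.det)
    (h : Mᵀ * N * M = γ • N) : M * N.adjugate * Mᵀ = γ • N.adjugate := by
  have hNM : IsUnit (N * M) := (isUnit_iff_isUnit_det _).mpr (by rw [det_mul]; exact hN.mul hM)
  refine hNM.mul_left_inj.mp ?_
  calc M * N.adjugate * Mᵀ * (N * M) = M * (N.adjugate * (Mᵀ * N * M)) := by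
        simp only [Matrix.mul_assoc]
    _ = (γ • N.adjugate) * (N * M) := by
        rw [h, Matrix.mul_smul, adjugate_mul, Matrix.smul_mul, ← Matrix.mul_assoc, adjugate_mul]
        simp only [Matrix.mul_smul, Matrix.smul_mul, Matrix.mul_one, Matrix.one_mul]

theorem dualQuadForm_transpose_mulVec {M : Matrix (Fin 3) (Fin 3) R} {γ : R}
    (h2 : IsUnit (2 : R)) (hdet : IsUnit M.det)
    (hM : ∀ x, quadForm R (M *ᵥ x) = γ * quadForm R x) (y : Fin 3 → R) :
    dualQuadForm R (Mᵀ *ᵥ y) = γ * dualQuadForm R y := by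
  have hdual := mul_adjugate_mul_transpose_eq hdet (det_polarMatrix (R := R) ▸ h2)
    (transpose_mul_polarMatrix_mul hM)
  rw [dualQuadForm_eq_dotProduct_adjugate_mulVec, dualQuadForm_eq_dotProduct_adjugate_mulVec,
    mulVec_transpose, ← dotProduct_mulVec, mulVec_mulVec, ← mulVec_transpose, mulVec_mulVec,
    hdual, smul_mulVec, dotProduct_smul, smul_eq_mul]

end Polarization

section Similitudes

variable {K : Type*} [Field K] {M : Matrix (Fin 3) (Fin 3) K} {γ : K}

theorem exists_eq_smul_symSquare_of_apply_zero_zero_ne_zero (h2 : (2 : K) ≠ 0)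
    (hQ : ∀ x, quadForm K (M *ᵥ x) = γ * quadForm K x)
    (hQ' : ∀ y, dualQuadForm K (Mᵀ *ᵥ y) = γ * dualQuadForm K y) (ha : M 0 0 ≠ 0) :
    ∃ (g : Matrix (Fin 2) (Fin 2) K) (c : K), c ≠ 0 ∧ M = c • symSquare g := by
  have col₀ := hQ ![1, 0, 0]
  have col₁ := hQ ![0, 1, 0]
  have col₂ := hQ ![0, 0, 1]
  have col₀₁ := hQ ![1, 1, 0]
  have col₀₂ := hQ ![1, 0, 1]
  have row₀ := hQ' ![1, 0, 0]
  have row₂ := hQ' ![0, 0, 1]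
  have row₀₂ := hQ' ![1, 0, 1]
  simp only [quadForm, dualQuadForm, mulVec, dotProduct, Fin.sum_univ_three, cons_val,
    transpose_apply] at col₀ col₁ col₂ col₀₁ col₀₂ row₀ row₂ row₀₂
  -- The first column of `M` is isotropic for `Q` and its first row for the dual form, so they
  -- are `M₀₀ • (1, r², r)` and `M₀₀ • (1, q², 2q)`, with `r`, `q` the off-diagonal entries of `g`.
  refine ⟨!![1, M 0 2 / (2 * M 0 0);
      M 2 0 / M 0 0, (2 * M 0 0 * M 2 2 - M 0 2 * M 2 0) / (2 * M 0 0 ^ 2)], M 0 0, ha, ?_⟩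
  ext i j
  fin_cases i <;> fin_cases j <;>
    simp only [Fin.zero_eta, Fin.mk_one, Fin.reduceFinMk, symSquare, Matrix.smul_apply, of_apply,
      cons_val, smul_eq_mul] <;>
    field_simp
  · linear_combination row₀
  · linear_combination col₀
  · linear_combination 4 * M 0 0 ^ 2 * (col₀₁ - col₀ - col₁) + 4 * M 0 0 ^ 2 * row₂
      + M 2 0 ^ 2 * row₀ - 4 * M 0 0 * M 0 1 * col₀
      - 2 * M 0 0 * M 2 0 * (row₀₂ - row₀ - row₂)
  · linear_combination M 0 0 * (col₀₂ - col₀ - col₂) - M 0 2 * col₀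
  · linear_combination M 0 0 * (row₀₂ - row₀ - row₂) - M 2 0 * row₀
  · ring

theorem exists_eq_smul_symSquare_of_apply_zero_zero_eq_zero (hdet : M.det ≠ 0)
    (hQ : ∀ x, quadForm K (M *ᵥ x) = γ * quadForm K x)
    (hQ' : ∀ y, dualQuadForm K (Mᵀ *ᵥ y) = γ * dualQuadForm K y) (ha : M 0 0 = 0) :
    ∃ (g : Matrix (Fin 2) (Fin 2) K) (c : K), c ≠ 0 ∧ M = c • symSquare g := by
  have hM20 : M 2 0 = 0 := by
    simpa [quadForm, mulVec, dotProduct, Fin.sum_univ_succ, ha] using hQ ![1, 0, 0]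
  have hM02 : M 0 2 = 0 := by
    simpa [dualQuadForm, mulVec, dotProduct, Fin.sum_univ_succ, ha] using hQ' ![1, 0, 0]
  have hM01 : M 0 1 ≠ 0 := fun h =>
    hdet (det_eq_zero_of_row_eq_zero 0 fun j => by fin_cases j <;> simp [ha, h, hM02])
  have col₁ := hQ ![0, 1, 0]
  have col₂ := hQ ![0, 0, 1]
  have col₀₁ := hQ ![1, 1, 0]
  have col₁₂ := hQ ![0, 1, 1]
  simp only [quadForm, mulVec, dotProduct, Fin.sum_univ_three, cons_val, ha, hM20, hM02]
    at col₁ col₂ col₀₁ col₁₂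
  refine ⟨!![0, 1; M 2 2 / M 0 1, M 2 1 / M 0 1], M 0 1, hM01, ?_⟩
  ext i j
  fin_cases i <;> fin_cases j <;>
    simp only [Fin.zero_eta, Fin.mk_one, Fin.reduceFinMk, symSquare, Matrix.smul_apply, of_apply,
      cons_val, smul_eq_mul, ha, hM20, hM02, zero_pow two_ne_zero, mul_zero, zero_mul, zero_add] <;>
    field_simp
  · linear_combination col₀₁ - col₁ + col₂
  · linear_combination col₁
  · linear_combination col₁₂ - col₁ - col₂

theorem exists_eq_smul_symSquare (h2 : (2 : K) ≠ 0) (hdet : M.det ≠ 0)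
    (hQ : ∀ x, quadForm K (M *ᵥ x) = γ * quadForm K x) :
    ∃ (g : Matrix (Fin 2) (Fin 2) K) (c : K), c ≠ 0 ∧ M = c • symSquare g := by
  have hQ' := dualQuadForm_transpose_mulVec h2.isUnit hdet.isUnit hQ
  by_cases ha : M 0 0 = 0
  · exact exists_eq_smul_symSquare_of_apply_zero_zero_eq_zero hdet hQ hQ' ha
  · exact exists_eq_smul_symSquare_of_apply_zero_zero_ne_zero h2 hQ hQ' ha

theorem symSquareGL_mem_similitudeGroup (g : GL (Fin 2) K) :
    symSquareGL K g ∈ similitudeGroup K :=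
  ⟨(g : Matrix (Fin 2) (Fin 2) K).det ^ 2,
    pow_ne_zero 2 ((isUnit_iff_isUnit_det _).mp g.isUnit).ne_zero, quadForm_symSquare_mulVec _⟩

variable (K) in
theorem scalarSubgroup_eq_center : scalarSubgroup K = Subgroup.center (GL (Fin 3) K) := by
  ext A
  rw [GeneralLinearGroup.mem_center_iff_val_mem_range_scalar]
  constructor
  · rintro ⟨μ, -, hA⟩
    exact ⟨μ, by rw [hA, scalar_apply, smul_one_eq_diagonal]⟩
  · rintro ⟨μ, hA⟩
    refine ⟨μ, fun hμ => A.ne_zero ?_, by rw [← hA, scalar_apply, smul_one_eq_diagonal]⟩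
    rw [← hA, hμ, map_zero]

instance scalarSubgroup_subgroupOf_normal :
    ((scalarSubgroup K).subgroupOf (similitudeGroup K)).Normal := by
  rw [scalarSubgroup_eq_center]
  exact Subgroup.Normal.subgroupOf inferInstance _

theorem exists_symSquareGL_inv_mul_mem_center (h2 : (2 : K) ≠ 0) {A : GL (Fin 3) K}
    (hA : A ∈ similitudeGroup K) :
    ∃ g, (symSquareGL K g)⁻¹ * A ∈ Subgroup.center (GL (Fin 3) K) := by
  obtain ⟨γ, -, hQ⟩ := hA
  have hdet := ((isUnit_iff_isUnit_det _).mp A.isUnit).ne_zero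
  obtain ⟨m, c, hc, hAm⟩ := exists_eq_smul_symSquare h2 hdet hQ
  have hm : IsUnit m := by
    rw [isUnit_iff_isUnit_det, isUnit_iff_ne_zero]
    intro hm0
    simp [hAm, det_symSquare, hm0] at hdet
  have hscalar : A = GeneralLinearGroup.scalar _ (Units.mk0 c hc) * symSquareGL K hm.unit := by
    ext : 1
    simp [hAm, smul_eq_diagonal_mul]
  have hcentral : GeneralLinearGroup.scalar (Fin 3) (Units.mk0 c hc) ∈ Subgroup.center _ := by
    rw [GeneralLinearGroup.center_eq_range_scalar]
    exact ⟨_, rfl⟩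
  refine ⟨hm.unit, ?_⟩
  rwa [hscalar, ← Subgroup.mem_center_iff.mp hcentral, inv_mul_cancel_left]

variable (K) in
def symSquareMod :
    GL (Fin 2) K →* similitudeGroup K ⧸ (scalarSubgroup K).subgroupOf (similitudeGroup K) :=
  (QuotientGroup.mk' _).comp ((symSquareGL K).codRestrict _ symSquareGL_mem_similitudeGroup)

theorem ker_symSquareMod : (symSquareMod K).ker = Subgroup.center (GL (Fin 2) K) := by
  ext g
  rw [MonoidHom.mem_ker, symSquareMod, MonoidHom.comp_apply, QuotientGroup.mk'_apply,
    QuotientGroup.eq_one_iff, Subgroup.mem_subgroupOf, scalarSubgroup_eq_center,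
    MonoidHom.codRestrict_apply, symSquareGL_mem_center_iff]

theorem symSquareMod_surjective (h2 : (2 : K) ≠ 0) : Function.Surjective (symSquareMod K) := by
  rintro ⟨A, hA⟩
  obtain ⟨g, h⟩ := exists_symSquareGL_inv_mul_mem_center h2 hA
  refine ⟨g, (QuotientGroup.eq (s := (scalarSubgroup K).subgroupOf _)).mpr ?_⟩
  rw [Subgroup.mem_subgroupOf, scalarSubgroup_eq_center]
  exact h

end Similitudes

/-- The group of similitudes of `Q` modulo its subgroup of nonzero scalar matrices
has order `s·(s² − 1)`, where `s` is the (odd) order of `K`. -/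
theorem card_similitudeGroup_mod_scalars
    (K : Type*) [Field K] [Fintype K] (hodd : Odd (Fintype.card K)) :
    Nat.card (similitudeGroup K ⧸ (scalarSubgroup K).subgroupOf (similitudeGroup K)) =
      Fintype.card K * (Fintype.card K ^ 2 - 1) := by
  have h2 : (2 : K) ≠ 0 := Ring.two_ne_zero fun h => by
    have := FiniteField.even_card_iff_char_two.mp h
    rw [Nat.odd_iff] at hodd
    omega
  set s := Fintype.card K
  have hcenter : Nat.card (Subgroup.center (GL (Fin 2) K)) = s - 1 := by
    rw [GeneralLinearGroup.card_center, Nat.card_units, Nat.card_eq_fintype_card]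
  have hGL : Nat.card (GL (Fin 2) K) = (s - 1) * (s * (s ^ 2 - 1)) := by
    rw [card_GL_field]
    simp only [Fin.prod_univ_two, Fin.val_zero, Fin.val_one, pow_zero, pow_one]
    rw [show s ^ 2 - s = s * (s - 1) by rw [Nat.mul_sub_one, sq]]
    ring
  have hquot := Nat.card_congr (QuotientGroup.quotientKerEquivOfSurjective _
    (symSquareMod_surjective h2)).toEquiv
  rw [ker_symSquareMod, ← Subgroup.index_eq_card] at hquot
  have hs : 0 < s - 1 := by have : 1 < s := Fintype.one_lt_card; omega
  refine Nat.eq_of_mul_eq_mul_left hs ?_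
  rw [← hquot, ← hGL, ← Subgroup.card_mul_index, hcenter]
end

section
/- Let K be a finite field of odd order, σ a field automorphism of K, and m ∈ K a nonsquare. Define a multiplication on K × K by (x,y)∘(u,v) = (x·v + y·u, y·v + m·σ(x)·σ(u)) (the Dickson semifield multiplication). Then this multiplication is commutative and has no zero divisors: if (x,y) ≠ (0,0) and (u,v) ≠ (0,0), then (x,y)∘(u,v) ≠ (0,0). -/
/-- The Dickson semifield multiplication on `K × K`:
`(x,y)∘(u,v) = (x·v + y·u, y·v + m·σ(x)·σ(u))`. -/
def dicksonMul {K : Type*} [Field K] (σ : K ≃+* K) (m : K) (p q : K × K) : K × K :=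
  (p.1 * q.2 + p.2 * q.1, p.2 * q.2 + m * σ p.1 * σ q.1)

lemma isSquare_mul_sigma {K : Type*} [Field K] [Fintype K] (σ : K ≃+* K) {t : K}
    (ht : t ≠ 0) : IsSquare (t * σ t) := by
  classical
  by_cases h : IsSquare t
  · exact h.mul (h.map (σ : K →+* K))
  · have hσ : ¬ IsSquare (σ t) := by
      intro hs
      have := hs.map (σ.symm : K →+* K)
      simp at this
      exact h this
    have hst : σ t ≠ 0 := by simpa using ht
    have h1 : quadraticChar K t = -1 := quadraticChar_neg_one_iff_not_isSquare.mpr h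
    have h2 : quadraticChar K (σ t) = -1 := quadraticChar_neg_one_iff_not_isSquare.mpr hσ
    have : quadraticChar K (t * σ t) = 1 := by rw [map_mul, h1, h2]; ring
    exact (quadraticChar_one_iff_isSquare (mul_ne_zero ht hst)).mp this

/-- The Dickson semifield multiplication is commutative and has no zero divisors. -/
theorem dicksonMul_comm_and_no_zero_divisors
    (K : Type*) [Field K] [Fintype K] (hodd : Odd (Fintype.card K))
    (σ : K ≃+* K) (m : K) (hm : ¬ IsSquare m) :
    (∀ p q : K × K, dicksonMul σ m p q = dicksonMul σ m q p) ∧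
    (∀ p q : K × K, p ≠ (0, 0) → q ≠ (0, 0) → dicksonMul σ m p q ≠ (0, 0)) := by
  constructor
  · intro p q
    simp only [dicksonMul, Prod.mk.injEq]
    constructor <;> ring
  · rintro ⟨x, y⟩ ⟨u, v⟩ hp hq h
    simp only [dicksonMul, Prod.mk.injEq] at h
    obtain ⟨h1, h2⟩ := h
    by_cases hx : x = 0
    · have hy : y ≠ 0 := by
        intro hy; exact hp (by simp [hx, hy])
      subst hx
      have hu : u = 0 := by
        have : y * u = 0 := by linear_combination h1
        exact (mul_eq_zero.mp this).resolve_left hy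
      subst hu
      have hv : v ≠ 0 := fun hv => hq (by simp [hv])
      have : y * v = 0 := by
        have := h2; simpa using this
      exact hv ((mul_eq_zero.mp this).resolve_left hy)
    · by_cases hu : u = 0
      · subst hu
        have hv : v ≠ 0 := fun hv => hq (by simp [hv])
        exact hv ((mul_eq_zero.mp (by linear_combination h1)).resolve_left hx)
      · -- x ≠ 0, u ≠ 0
        have hxu : x * u ≠ 0 := mul_ne_zero hx hu
        have hσ0 : σ (x * u) ≠ 0 := fun h0 => hxu (σ.injective (by rw [h0, map_zero]))
        have key : m * ((x * u) * σ (x * u)) = (y * u) ^ 2 := by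
          rw [map_mul]
          linear_combination (x * u) * h2 - (y * u) * h1
        obtain ⟨r, hr⟩ := isSquare_mul_sigma σ hxu
        have hr0 : r ≠ 0 := by
          intro h0
          exact mul_ne_zero hxu hσ0 (by rw [hr, h0, mul_zero])
        apply hm
        refine ⟨y * u / r, ?_⟩
        have : m * (r * r) = (y * u) ^ 2 := by rw [← hr]; exact key
        field_simp
        linear_combination this
end

section
/- Let K be a finite field of order 3ⁿ with n ≥ 2 and let η ∈ K be a nonsquare. Define a multiplication on K × K by (x,y)∘(u,v) = (x·v + y·u + x³·u³, y·v + η·x⁹·u⁹ + η⁻¹·x·u) (the Cohen–Ganley semifield multiplication). Then this multiplication is commutative and has no zero divisors: if (x,y) ≠ (0,0) and (u,v) ≠ (0,0), then (x,y)∘(u,v) ≠ (0,0). -/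
/-- The Cohen–Ganley semifield multiplication on `K × K`:
`(x,y)∘(u,v) = (x·v + y·u + x³·u³, y·v + η·x⁹·u⁹ + η⁻¹·x·u)`. -/
def cohenGanleyMul {K : Type*} [Field K] (η : K) (p q : K × K) : K × K :=
  (p.1 * q.2 + p.2 * q.1 + p.1 ^ 3 * q.1 ^ 3,
   p.2 * q.2 + η * p.1 ^ 9 * q.1 ^ 9 + η⁻¹ * p.1 * q.1)

/-- The Cohen–Ganley semifield multiplication is commutative and has no zero divisors. -/
theorem cohenGanleyMul_comm_and_no_zero_divisors
    (K : Type*) [Field K] [Fintype K] (n : ℕ) (hn : 2 ≤ n)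
    (hcard : Fintype.card K = 3 ^ n)
    (η : K) (hη : ¬ IsSquare η) :
    (∀ p q : K × K, cohenGanleyMul η p q = cohenGanleyMul η q p) ∧
    (∀ p q : K × K, p ≠ (0, 0) → q ≠ (0, 0) → cohenGanleyMul η p q ≠ (0, 0)) := by
  have h3 : (3 : K) = 0 := by
    have hc := FiniteField.cast_card_eq_zero K
    rw [hcard] at hc
    push_cast at hc
    exact pow_eq_zero_iff (n := n) (by omega) |>.mp hc
  have hη0 : η ≠ 0 := fun h => hη ⟨0, by simp [h]⟩
  have hinv : η⁻¹ * η = 1 := inv_mul_cancel₀ hη0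
  constructor
  · intro p q
    simp only [cohenGanleyMul, Prod.mk.injEq]
    constructor <;> ring
  · rintro ⟨x, y⟩ ⟨u, v⟩ hp hq heq
    simp only [cohenGanleyMul, Prod.mk.injEq] at heq
    obtain ⟨e1, e2⟩ := heq
    simp only [ne_eq, Prod.mk.injEq, not_and_or] at hp hq
    by_cases hx : x = 0
    · subst hx
      have hy : y ≠ 0 := by tauto
      have hu : u = 0 := by
        have h1 : y * u = 0 := by linear_combination e1
        rcases mul_eq_zero.mp h1 with h | h
        · exact absurd h hy
        · exact h
      have hv : v = 0 := by
        have h2 : y * v = 0 := by linear_combination e2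
        rcases mul_eq_zero.mp h2 with h | h
        · exact absurd h hy
        · exact h
      exact absurd (Or.inl hu) (by tauto)
    · by_cases hu : u = 0
      · subst hu
        have h1 : x * v = 0 := by linear_combination e1
        have hv : v = 0 := by
          rcases mul_eq_zero.mp h1 with h | h
          · exact absurd h hx
          · exact h
        exact absurd (Or.inr hv) (by tauto)
      · -- main case : x ≠ 0, u ≠ 0
        set w := y - x ^ 3 * u ^ 2 with hw
        set d := 1 - η * x ^ 4 * u ^ 4 with hd
        have key : w ^ 2 * u = η⁻¹ * x ^ 2 * d ^ 2 * u := by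
          rw [hw, hd]
          linear_combination y * e1 - x * e2 + (x ^ 6 * u ^ 5 - y * x ^ 3 * u ^ 3) * h3 +
            (2 * x ^ 6 * u ^ 5 - η * x ^ 10 * u ^ 9) * hinv
        have key2 : w ^ 2 = η⁻¹ * x ^ 2 * d ^ 2 := mul_right_cancel₀ hu key
        have hdne : d ≠ 0 := by
          intro hd0
          apply hη
          refine ⟨(x ^ 2 * u ^ 2)⁻¹, ?_⟩
          have h1 : η * x ^ 4 * u ^ 4 = 1 := by
            have := hd0
            rw [hd] at this
            linear_combination -this
          field_simp
          linear_combination h1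
        have hwne : w ≠ 0 := by
          intro hw0
          rw [hw0] at key2
          have hne : η⁻¹ * x ^ 2 * d ^ 2 ≠ 0 :=
            mul_ne_zero (mul_ne_zero (inv_ne_zero hη0) (pow_ne_zero _ hx)) (pow_ne_zero _ hdne)
          exact hne (by linear_combination -key2)
        apply hη
        refine ⟨x * d / w, ?_⟩
        have hmain : η * w ^ 2 = x ^ 2 * d ^ 2 := by
          linear_combination η * key2 + x ^ 2 * d ^ 2 * hinv
        field_simp
        linear_combination hmain
end

section
/- Let K be the finite field of order 3⁵. Define a multiplication on K × K by (x,y)∘(u,v) = (x·v + y·u + x²⁷·u²⁷, y·v + x⁹·u⁹) (the Penttila–Williams semifield multiplication). Then this multiplication is commutative and has no zero divisors: if (x,y) ≠ (0,0) and (u,v) ≠ (0,0), then (x,y)∘(u,v) ≠ (0,0). -/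
/-- The Penttila–Williams semifield multiplication on `K × K`:
`(x,y)∘(u,v) = (x·v + y·u + x²⁷·u²⁷, y·v + x⁹·u⁹)`. -/
def penttilaWilliamsMul {K : Type*} [Field K] (p q : K × K) : K × K :=
  (p.1 * q.2 + p.2 * q.1 + p.1 ^ 27 * q.1 ^ 27,
   p.2 * q.2 + p.1 ^ 9 * q.1 ^ 9)

/-- Key fact: for `z` an 11th root of unity in characteristic 3,
`(1+z)(1+z³)(1+z⁴)(1+z⁵)(1+z⁹) = -1`. -/
lemma pw_key {K : Type*} [Field K] [CharP K 3] (z : K) (h : z ^ 11 = 1) :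
    (1 + z) * (1 + z ^ 3) * (1 + z ^ 4) * (1 + z ^ 5) * (1 + z ^ 9) = -1 := by
  have h3 : (3 : K) = 0 := by exact_mod_cast CharP.cast_eq_zero K 3
  linear_combination (1 + 2*z + 3*z^2 + 2*z^3 + z^4 + z^5 + 2*z^6 + 2*z^7 + z^8 + z^10 + z^11) * h
    + (1 + z + z^2 + z^3 + z^4 + z^5 + z^6 + z^7 + z^8 + z^9 + z^10) * h3

/-- The Penttila–Williams semifield multiplication is commutative and has no zero
divisors, where `K = GF(3⁵)` is the field of order `243`. -/
theorem penttilaWilliamsMul_comm_and_no_zero_divisors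
    (K : Type*) [Field K] [Fintype K] (hcard : Fintype.card K = 3 ^ 5) :
    (∀ p q : K × K, penttilaWilliamsMul p q = penttilaWilliamsMul q p) ∧
    (∀ p q : K × K, p ≠ (0, 0) → q ≠ (0, 0) → penttilaWilliamsMul p q ≠ (0, 0)) := by
  -- characteristic 3
  have hchar : ringChar K = 3 := by
    obtain ⟨n, hp, hq⟩ := FiniteField.card K (ringChar K)
    rw [hcard] at hq
    have hd : (ringChar K) ∣ 3 :=
      hp.dvd_of_dvd_pow (hq ▸ dvd_pow_self (ringChar K) n.ne_zero : ringChar K ∣ 3 ^ 5)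
    exact ((Nat.prime_dvd_prime_iff_eq hp Nat.prime_three).mp hd)
  haveI : CharP K 3 := hchar ▸ ringChar.charP K
  haveI : Fact (Nat.Prime 3) := ⟨Nat.prime_three⟩
  have h3 : (3 : K) = 0 := by exact_mod_cast CharP.cast_eq_zero K 3
  have hone : (1 : K) ≠ -1 := by
    intro hcon
    have h2 : (2 : K) = 0 := by linear_combination hcon
    have : (1 : K) = 0 := by linear_combination h3 - h2
    exact one_ne_zero this
  have hpow : ∀ a : K, a ≠ 0 → a ^ 242 = 1 := by
    intro a ha
    have := FiniteField.pow_card_sub_one_eq_one a ha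
    rwa [hcard] at this
  constructor
  · intro p q
    simp only [penttilaWilliamsMul, Prod.mk.injEq]
    constructor <;> ring
  · rintro ⟨x, y⟩ ⟨u, v⟩ hp hq hcon
    simp only [penttilaWilliamsMul, Prod.mk.injEq] at hcon
    obtain ⟨e1, e2⟩ := hcon
    have hxy : x ≠ 0 ∨ y ≠ 0 := by
      by_contra hc; push_neg at hc; exact hp (by simp [hc.1, hc.2])
    have huv : u ≠ 0 ∨ v ≠ 0 := by
      by_contra hc; push_neg at hc; exact hq (by simp [hc.1, hc.2])
    rcases eq_or_ne x 0 with hx | hx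
    · subst hx
      have hy : y ≠ 0 := hxy.resolve_left (by simp)
      have hu : u = 0 := by
        have : y * u = 0 := by linear_combination e1
        exact (mul_eq_zero.mp this).resolve_left hy
      have hv : v = 0 := by
        have : y * v = 0 := by linear_combination e2
        exact (mul_eq_zero.mp this).resolve_left hy
      exact hq (by simp [hu, hv])
    rcases eq_or_ne u 0 with hu | hu
    · subst hu
      have hv : v ≠ 0 := huv.resolve_left (by simp)
      have hx0 : x = 0 := by
        have : x * v = 0 := by linear_combination e1
        exact (mul_eq_zero.mp this).resolve_right hv
      exact hx hx0
    -- main case : x ≠ 0, u ≠ 0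
    have hy : y ≠ 0 := by
      intro hy0
      have : x ^ 9 * u ^ 9 = 0 := by rw [hy0] at e2; linear_combination e2
      exact pow_ne_zero 9 hx ((mul_eq_zero.mp this).resolve_right (pow_ne_zero 9 hu))
    -- the normalized equation
    set w : K := u * x with hw_def
    have hw : w ≠ 0 := mul_ne_zero hu hx
    have star : y ^ 2 * u + x ^ 27 * u ^ 27 * y - x ^ 10 * u ^ 9 = 0 := by
      linear_combination y * e1 - x * e2
    set A : K := y - x * w ^ 26 with hA_def
    set B : K := x * w ^ 4 with hB_def
    have hB : B ≠ 0 := mul_ne_zero hx (pow_ne_zero 4 hw)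
    have hAB : u * A ^ 2 = u * (B ^ 2 * (1 + w ^ 44)) := by
      rw [hA_def, hB_def, hw_def]
      linear_combination star - (u * x * y * (u * x) ^ 26) * h3
    have hAB2 : A ^ 2 = B ^ 2 * (1 + w ^ 44) := mul_left_cancel₀ hu hAB
    set z : K := w ^ 44 with hz_def
    have hz11 : z ^ 11 = 1 := by
      rw [hz_def, ← pow_mul]
      have : w ^ (44 * 11) = (w ^ 242) ^ 2 := by rw [← pow_mul]
      rw [this, hpow w hw, one_pow]
    -- (1+z)^121 = -1
    have frob : ∀ n : ℕ, (1 + z) ^ 3 ^ n = 1 + z ^ 3 ^ n := fun n => by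
      rw [add_pow_char_pow]; simp
    have f1 := frob 1; have f2 := frob 2; have f3 := frob 3; have f4 := frob 4
    norm_num at f1 f2 f3 f4
    have hz27 : z ^ 27 = z ^ 5 := by
      calc z ^ 27 = (z ^ 11) ^ 2 * z ^ 5 := by ring
      _ = z ^ 5 := by rw [hz11]; ring
    have hz81 : z ^ 81 = z ^ 4 := by
      calc z ^ 81 = (z ^ 11) ^ 7 * z ^ 4 := by ring
      _ = z ^ 4 := by rw [hz11]; ring
    have h121 : (1 + z) ^ 121 = -1 := by
      calc (1 + z) ^ 121 = (1 + z) * (1 + z) ^ 3 * (1 + z) ^ 9 * (1 + z) ^ 27 * (1 + z) ^ 81 := by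
            ring
        _ = (1 + z) * (1 + z ^ 3) * (1 + z ^ 9) * (1 + z ^ 5) * (1 + z ^ 4) := by
            rw [f1, f2, f3, f4, hz27, hz81]
        _ = -1 := by linear_combination pw_key z hz11
    rcases eq_or_ne A 0 with hA | hA
    · have : B ^ 2 * (1 + z) = 0 := by rw [← hAB2, hA]; ring
      have h1z : 1 + z = 0 := (mul_eq_zero.mp this).resolve_left (pow_ne_zero 2 hB)
      rw [h1z] at h121
      simp at h121
    · have hL : (A ^ 2) ^ 121 = 1 := by
        rw [← pow_mul]
        exact hpow A hA
      have hR : (A ^ 2) ^ 121 = -1 := by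
        rw [hAB2, mul_pow, ← pow_mul, h121, hpow B hB, one_mul]
      exact hone (hL ▸ hR)
end
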